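/- Consider n unit-demand bidders and n items where bidders i = 1,...,n−1 value items i and n at 1−ε each (value of any set is 1−ε if it contains item i or item n, else 0), and bidder n values any nonempty subset of {1,...,n−1} at 1 (and item n at 0). The profile where bidder n bids 1 on items 1,...,n−1 and 0 on item n, and each bidder i < n bids 0 on item i and 1−ε on item n, is a pure Nash equilibrium of the simultaneous second-price auction in which every bidder plays an undominated strategy; its welfare is 2−ε while the optimal welfare is at least (n−1)(1−ε)+1, so the welfare ratio is Ω(n). -/

import Mathlib

open Finset

/-- Valuations: bidders and items are both indexed by `Fin (n+1)`.  Each unit-demand bidder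
`i ≠ n` values any set containing item `i` or item `n` at `1 - ε`; bidder `n` values any set
containing an item other than item `n` at `1`. -/
noncomputable def val (n : ℕ) (ε : ℝ) (i : Fin (n + 1)) (S : Finset (Fin (n + 1))) : ℝ :=
  if i = Fin.last n then (if ∃ j ∈ S, j ≠ Fin.last n then 1 else 0)
  else (if i ∈ S ∨ Fin.last n ∈ S then 1 - ε else 0)

/-- The bid profile: bidder `n` bids `1` on every item other than item `n`; every other bidder
bids `1 - ε` on item `n` and `0` elsewhere. -/
noncomputable def bid (n : ℕ) (ε : ℝ) (i j : Fin (n + 1)) : ℝ :=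
  if i = Fin.last n then (if j = Fin.last n then 0 else 1)
  else (if j = Fin.last n then 1 - ε else 0)

/-- The tie-broken allocation: item `n` goes to bidder `0`; every other item goes to bidder
`n`. -/
def alloc (n : ℕ) (j : Fin (n + 1)) : Fin (n + 1) :=
  if j = Fin.last n then 0 else Fin.last n

/-- The set of items won by bidder `i`. -/
def won (n : ℕ) (i : Fin (n + 1)) : Finset (Fin (n + 1)) :=
  Finset.univ.filter fun j => alloc n j = i

/-- The highest bid on item `j` among bidders other than `i`. -/
noncomputable def maxOther (n : ℕ) (ε : ℝ) (i j : Fin (n + 1)) : ℝ :=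
  (((Finset.univ.erase i).sup fun k => Real.toNNReal (bid n ε k j) : NNReal) : ℝ)

/-!
Bidder `n` wins all items `< n` for free, since nobody else bids on them, and no set is worth
more than `1` to him. Any other bidder faces a price of at least `1 - ε` on every item (bidder
`n` bids `1` on items `< n`, and some other bidder `k < n` bids `1 - ε` on item `n`), while no
set is worth more than `1 - ε` to him; so no deviation gives him positive utility, and his
equilibrium utility is `0`. Swapping the items of bidders `0` and `n` in the identity
allocation gives every bidder a set he values.
-/

noncomputable def utility (n : ℕ) (ε : ℝ) (i : Fin (n + 1)) (S : Finset (Fin (n + 1))) : ℝ :=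
  val n ε i S - ∑ j ∈ S, maxOther n ε i j

theorem coe_sup_toNNReal_eq {ι : Type*} {s : Finset ι} {f : ι → ℝ} {b : ℝ} (hb : 0 ≤ b)
    (hle : ∀ k ∈ s, f k ≤ b) (hattain : ∃ k ∈ s, f k = b) :
    ((s.sup fun k => (f k).toNNReal : NNReal) : ℝ) = b := by
  obtain ⟨k, hk, rfl⟩ := hattain
  have hsup : (s.sup fun k => (f k).toNNReal) = (f k).toNNReal :=
    le_antisymm (Finset.sup_le fun l hl => Real.toNNReal_le_toNNReal (hle l hl))
      (Finset.le_sup (f := fun k => (f k).toNNReal) hk)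
  rw [hsup, Real.coe_toNNReal _ hb]

section

variable {n : ℕ} {ε : ℝ}

theorem zero_ne_last (hn : 1 ≤ n) : (0 : Fin (n + 1)) ≠ Fin.last n := by
  simp [Fin.ext_iff]; omega

theorem exists_ne_ne_last (hn : 2 ≤ n) (i : Fin (n + 1)) :
    ∃ k : Fin (n + 1), k ≠ i ∧ k ≠ Fin.last n := by
  by_cases hi : i.val = 0
  · exact ⟨⟨1, by omega⟩, by simp [Fin.ext_iff]; omega, by simp [Fin.ext_iff]; omega⟩
  · exact ⟨0, by simp [Fin.ext_iff]; omega, zero_ne_last (by omega)⟩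

theorem bid_le_one (hε : 0 ≤ ε) (k j : Fin (n + 1)) : bid n ε k j ≤ 1 := by
  unfold bid; split_ifs <;> linarith

theorem bid_last_item_le (hε : ε ≤ 1) (k : Fin (n + 1)) :
    bid n ε k (Fin.last n) ≤ 1 - ε := by
  simp only [bid]; split_ifs <;> linarith

theorem maxOther_nonneg (i j : Fin (n + 1)) : 0 ≤ maxOther n ε i j :=
  NNReal.coe_nonneg _

theorem maxOther_eq_one (hε : 0 ≤ ε) {i j : Fin (n + 1)} (hi : i ≠ Fin.last n)
    (hj : j ≠ Fin.last n) : maxOther n ε i j = 1 :=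
  coe_sup_toNNReal_eq zero_le_one (fun k _ => bid_le_one hε k j)
    ⟨Fin.last n, by simp [hi.symm], by simp [bid, hj]⟩

theorem maxOther_last_item (hn : 2 ≤ n) (hε : ε ≤ 1) (i : Fin (n + 1)) :
    maxOther n ε i (Fin.last n) = 1 - ε := by
  obtain ⟨k, hki, hkl⟩ := exists_ne_ne_last hn i
  exact coe_sup_toNNReal_eq (by linarith) (fun k _ => bid_last_item_le hε k)
    ⟨k, by simp [hki], by simp [bid, hkl]⟩

theorem maxOther_last_bidder (hn : 1 ≤ n) {j : Fin (n + 1)} (hj : j ≠ Fin.last n) :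
    maxOther n ε (Fin.last n) j = 0 :=
  coe_sup_toNNReal_eq le_rfl (fun k hk => by simp [bid, (Finset.mem_erase.1 hk).1, hj])
    ⟨0, by simp [zero_ne_last hn], by simp [bid, zero_ne_last hn, hj]⟩

theorem one_sub_le_maxOther (hn : 2 ≤ n) (hε0 : 0 ≤ ε) (hε1 : ε ≤ 1) {i : Fin (n + 1)}
    (hi : i ≠ Fin.last n) (j : Fin (n + 1)) : 1 - ε ≤ maxOther n ε i j := by
  by_cases hj : j = Fin.last n
  · rw [hj, maxOther_last_item hn hε1]
  · rw [maxOther_eq_one hε0 hi hj]; linarith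

theorem won_last (hn : 1 ≤ n) : won n (Fin.last n) = univ.erase (Fin.last n) := by
  ext j
  by_cases hj : j = Fin.last n <;> simp [won, alloc, hj, zero_ne_last hn]

theorem won_zero (hn : 1 ≤ n) : won n 0 = {Fin.last n} := by
  ext j
  by_cases hj : j = Fin.last n <;> simp [won, alloc, hj, (zero_ne_last hn).symm]

theorem won_eq_empty {i : Fin (n + 1)} (h0 : i ≠ 0) (hl : i ≠ Fin.last n) : won n i = ∅ := by
  rw [won, Finset.filter_eq_empty_iff]
  intro j _
  unfold alloc
  split_ifs
  exacts [h0.symm, hl.symm]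

-- `open Finset` makes a bare `val` ambiguous with `Finset.val` in `simp`/`rw` lemma lists.
theorem val_le_one_sub (hε : ε ≤ 1) {i : Fin (n + 1)} (hi : i ≠ Fin.last n)
    (S : Finset (Fin (n + 1))) : val n ε i S ≤ 1 - ε := by
  simp only [_root_.val, if_neg hi]; split_ifs <;> linarith

theorem val_last_le_one (S : Finset (Fin (n + 1))) : val n ε (Fin.last n) S ≤ 1 := by
  simp only [_root_.val]; split_ifs <;> norm_num

theorem val_empty {i : Fin (n + 1)} (hi : i ≠ Fin.last n) : val n ε i ∅ = 0 := by
  simp [_root_.val, hi]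

theorem val_of_mem {i : Fin (n + 1)} (hi : i ≠ Fin.last n) {S : Finset (Fin (n + 1))}
    (hS : i ∈ S ∨ Fin.last n ∈ S) : val n ε i S = 1 - ε := by
  simp only [_root_.val, if_neg hi, if_pos hS]

theorem val_last_of_mem {S : Finset (Fin (n + 1))} {j : Fin (n + 1)} (hj : j ∈ S)
    (hjl : j ≠ Fin.last n) : val n ε (Fin.last n) S = 1 := by
  rw [_root_.val, if_pos rfl, if_pos ⟨j, hj, hjl⟩]

theorem utility_le_zero (hn : 2 ≤ n) (hε0 : 0 ≤ ε) (hε1 : ε ≤ 1) {i : Fin (n + 1)}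
    (hi : i ≠ Fin.last n) (S : Finset (Fin (n + 1))) : utility n ε i S ≤ 0 := by
  rcases S.eq_empty_or_nonempty with rfl | ⟨j, hj⟩
  · simp [utility, val_empty hi]
  · have hprice : maxOther n ε i j ≤ ∑ k ∈ S, maxOther n ε i k :=
      Finset.single_le_sum (fun k _ => maxOther_nonneg i k) hj
    have hprice_j := one_sub_le_maxOther hn hε0 hε1 hi j
    have hvalue := val_le_one_sub hε1 hi S
    unfold utility; linarith

theorem utility_won_of_ne_last (hn : 2 ≤ n) (hε : ε ≤ 1) {i : Fin (n + 1)}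
    (hi : i ≠ Fin.last n) : utility n ε i (won n i) = 0 := by
  by_cases h0 : i = 0
  · subst h0
    rw [utility, won_zero (by omega), Finset.sum_singleton, maxOther_last_item hn hε,
      val_of_mem hi (Or.inr (Finset.mem_singleton_self _)), sub_self]
  · simp [utility, won_eq_empty h0 hi, val_empty hi]

theorem utility_last_le_one (S : Finset (Fin (n + 1))) : utility n ε (Fin.last n) S ≤ 1 := by
  have hprice := Finset.sum_nonneg fun j (_ : j ∈ S) => maxOther_nonneg (ε := ε) (Fin.last n) j
  have hvalue := val_last_le_one (ε := ε) S
  unfold utility; linarith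

theorem utility_won_last (hn : 1 ≤ n) : utility n ε (Fin.last n) (won n (Fin.last n)) = 1 := by
  have h0 := zero_ne_last hn
  rw [utility, won_last hn, val_last_of_mem (by simp [h0]) h0,
    Finset.sum_eq_zero fun j hj => maxOther_last_bidder hn (Finset.mem_erase.1 hj).1, sub_zero]

theorem utility_le_utility_won (hn : 2 ≤ n) (hε0 : 0 ≤ ε) (hε1 : ε ≤ 1) (i : Fin (n + 1))
    (S : Finset (Fin (n + 1))) : utility n ε i S ≤ utility n ε i (won n i) := by
  by_cases hi : i = Fin.last n
  · subst hi
    rw [utility_won_last (by omega)]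
    exact utility_last_le_one S
  · rw [utility_won_of_ne_last hn hε1 hi]
    exact utility_le_zero hn hε0 hε1 hi S

theorem sum_val_won (hn : 1 ≤ n) : ∑ i, val n ε i (won n i) = 2 - ε := by
  have h0 := zero_ne_last hn
  have hrest (i : Fin (n + 1)) (hi : i ≠ 0 ∧ i ≠ Fin.last n) : val n ε i (won n i) = 0 := by
    rw [won_eq_empty hi.1 hi.2, val_empty hi.2]
  rw [Fintype.sum_eq_add 0 (Fin.last n) h0 hrest, won_zero hn,
    val_of_mem h0 (Or.inr (Finset.mem_singleton_self _)), won_last hn,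
    val_last_of_mem (by simp [h0]) h0]
  ring

theorem sum_val_swap (hn : 1 ≤ n) :
    ∑ i, val n ε i {Equiv.swap 0 (Fin.last n) i} = n * (1 - ε) + 1 := by
  have h0 := zero_ne_last hn
  have hlow (i : Fin n) : val n ε i.castSucc {Equiv.swap 0 (Fin.last n) i.castSucc} = 1 - ε := by
    refine val_of_mem (Fin.castSucc_ne_last i) ?_
    by_cases hi : i.castSucc = 0
    · simp [hi]
    · simp [Equiv.swap_apply_of_ne_of_ne hi (Fin.castSucc_ne_last i)]
  rw [Fin.sum_univ_castSucc, Finset.sum_congr rfl fun i _ => hlow i, Equiv.swap_apply_right,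
    val_last_of_mem (Finset.mem_singleton_self 0) h0]
  simp only [Finset.sum_const, Finset.card_univ, Fintype.card_fin, nsmul_eq_mul]

end

/-- The `Ω(n)` welfare-gap example for second-price simultaneous auctions: the given bid
profile is a pure Nash equilibrium (deviations win the items where they meet the opposing
bids, paying the second price), its welfare is `2 - ε`, while some allocation has welfare
`n·(1-ε) + 1`. -/
theorem stmt16 (n : ℕ) (hn : 2 ≤ n) (ε : ℝ) (hε0 : 0 < ε) (hε1 : ε < 1) :
    (∀ (i : Fin (n + 1)) (c : Fin (n + 1) → ℝ),
      val n ε i (Finset.univ.filter fun j => maxOther n ε i j ≤ c j) -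
          (∑ j ∈ Finset.univ.filter fun j => maxOther n ε i j ≤ c j, maxOther n ε i j) ≤
        val n ε i (won n i) - ∑ j ∈ won n i, maxOther n ε i j) ∧
      (∑ i, val n ε i (won n i)) = 2 - ε ∧
      (∃ O : Fin (n + 1) → Finset (Fin (n + 1)),
        (∀ i k : Fin (n + 1), i ≠ k → Disjoint (O i) (O k)) ∧
        ∑ i, val n ε i (O i) = n * (1 - ε) + 1) :=
  ⟨fun i _ => utility_le_utility_won hn hε0.le hε1.le i _, sum_val_won (by omega),
    fun i => {Equiv.swap 0 (Fin.last n) i},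
    fun _ _ h => Finset.disjoint_singleton.2 ((Equiv.injective _).ne h), sum_val_swap (by omega)⟩
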